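/- arXiv:2508.03956 — 3 statements merged into one kernel-verified Lean document; each statement's English description precedes it below -/
import Mathlib

section
/- For any infinite set A, the quotient of A³ by the equivalence relation ẋ ≐ ẏ iff (x₂ = x₃ ∧ y₂ = y₃ ∧ x₁ = y₁) ∨ (x₂ ≠ x₃ ∧ y₂ ≠ y₃) is in definable bijection with A ⊔ {*}; that is, ≐ is an equivalence relation on A³, its quotient has exactly one class consisting of all triples with x₂ ≠ x₃, the remaining classes are in bijection with A via a ↦ [⟨a,a,a⟩], and the structure ⟨A³/≐, [class of triples with distinct last coordinates]⟩ satisfies the theory of infinite sets with one constant. -/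
/-- The relation `≐` on triples:
`x̄ ≐ ȳ ⟺ (x₂ = x₃ ∧ y₂ = y₃ ∧ x₁ = y₁) ∨ (x₂ ≠ x₃ ∧ y₂ ≠ y₃)`. -/
def dotEq (A : Type*) (x y : A × A × A) : Prop :=
  (x.2.1 = x.2.2 ∧ y.2.1 = y.2.2 ∧ x.1 = y.1) ∨ (x.2.1 ≠ x.2.2 ∧ y.2.1 ≠ y.2.2)

lemma dotEq_equiv (A : Type*) : Equivalence (dotEq A) := by
  constructor
  · intro x
    by_cases h : x.2.1 = x.2.2
    · exact Or.inl ⟨h, h, rfl⟩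
    · exact Or.inr ⟨h, h⟩
  · rintro x y (⟨h1, h2, h3⟩ | ⟨h1, h2⟩)
    · exact Or.inl ⟨h2, h1, h3.symm⟩
    · exact Or.inr ⟨h2, h1⟩
  · rintro x y z (⟨h1, h2, h3⟩ | ⟨h1, h2⟩) (⟨g1, g2, g3⟩ | ⟨g1, g2⟩)
    · exact Or.inl ⟨h1, g2, h3.trans g3⟩
    · exact absurd h2 g1
    · exact absurd g1 h2
    · exact Or.inr ⟨h1, g2⟩

lemma dotEq_mk_eq {A : Type*} {x y : A × A × A} :
    Quot.mk (dotEq A) x = Quot.mk (dotEq A) y ↔ dotEq A x y := by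
  rw [Quot.eq]
  exact (dotEq_equiv A).eqvGen_iff

/-- For an infinite set `A`, `≐` is an equivalence relation on `A³`; its quotient
has exactly one class consisting of all triples with `x₂ ≠ x₃`, and the remaining
classes are in bijection with `A` via `a ↦ [⟨a,a,a⟩]`: there is a bijection
`A ⊕ {*} ≃ A³/≐` sending `a` to `[⟨a,a,a⟩]` and `*` to the class of triples with
distinct last coordinates.  In particular the quotient with this distinguished
element is a model of the theory of infinite sets with one constant (its domain is
infinite). -/
theorem quotient_interpretation_adds_a_point (A : Type*) [Infinite A] :
    Equivalence (dotEq A) ∧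
    (∃ e : A ⊕ PUnit ≃ Quot (dotEq A),
      (∀ a : A, e (Sum.inl a) = Quot.mk (dotEq A) (a, a, a)) ∧
      (∀ x : A × A × A, x.2.1 ≠ x.2.2 →
        e (Sum.inr PUnit.unit) = Quot.mk (dotEq A) x)) ∧
    Infinite (Quot (dotEq A)) := by
  obtain ⟨b, c, hbc⟩ : ∃ b c : A, b ≠ c := by
    obtain ⟨b, c, h⟩ := Infinite.instNontrivial A
    exact ⟨b, c, h⟩
  refine ⟨dotEq_equiv A, ?_, ?_⟩
  · -- bijection
    set f : A ⊕ PUnit → Quot (dotEq A) := fun s =>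
      match s with
      | Sum.inl a => Quot.mk (dotEq A) (a, a, a)
      | Sum.inr _ => Quot.mk (dotEq A) (b, b, c)
    have hinj : Function.Injective f := by
      rintro (a | u) (a' | u') h
      · rcases dotEq_mk_eq.mp h with ⟨_, _, h3⟩ | ⟨h1, _⟩
        · exact congrArg Sum.inl h3
        · exact absurd rfl h1
      · rcases dotEq_mk_eq.mp h with ⟨_, h2, _⟩ | ⟨h1, _⟩
        · exact absurd h2 hbc
        · exact absurd rfl h1
      · rcases dotEq_mk_eq.mp h with ⟨h1, _, _⟩ | ⟨_, h2⟩
        · exact absurd h1 hbc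
        · exact absurd rfl h2
      · rfl
    have hsurj : Function.Surjective f := by
      intro q
      obtain ⟨⟨x1, x2, x3⟩, rfl⟩ := Quot.exists_rep q
      by_cases h : x2 = x3
      · exact ⟨Sum.inl x1, dotEq_mk_eq.mpr (Or.inl ⟨rfl, h, rfl⟩)⟩
      · exact ⟨Sum.inr PUnit.unit, dotEq_mk_eq.mpr (Or.inr ⟨hbc, h⟩)⟩
    refine ⟨Equiv.ofBijective f ⟨hinj, hsurj⟩, fun a => rfl, fun x hx => ?_⟩
    exact dotEq_mk_eq.mpr (Or.inr ⟨hbc, hx⟩)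
  · refine Infinite.of_injective (fun a : A => Quot.mk (dotEq A) (a, a, a)) ?_
    intro a a' h
    rcases dotEq_mk_eq.mp h with ⟨_, _, h3⟩ | ⟨h1, _⟩
    · exact h3
    · exact absurd rfl h1
end

section
/- The theory of infinite sets in the empty language and the theory of infinite sets with one constant are bi-interpretable: the composite of the quotient interpretation t (adding a new point via triples) with the relativization interpretation s (deleting the constant) yields structures definably isomorphic to the originals, via isomorphisms given by x ↦ [⟨x,x,x⟩] and its analogue. -/
open Classical in
/-- Invariant of the quotient: diagonal classes give `some` of the first coordinate,
the distinct class gives `none`. -/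
noncomputable def dotInv (A : Type*) : Quot (dotEq A) → Option A :=
  Quot.lift (fun t => if t.2.1 = t.2.2 then some t.1 else none) (by
    rintro x y h
    rcases h with ⟨h1, h2, h3⟩ | ⟨h1, h2⟩
    · simp [h1, h2, h3]
    · simp [h1, h2])

open Classical in
lemma dotInv_mk (A : Type*) (t : A × A × A) :
    dotInv A (Quot.mk (dotEq A) t) = if t.2.1 = t.2.2 then some t.1 else none := rfl

/-- Bi-interpretability of the theory of infinite sets (empty language) with the
theory of infinite sets with one constant `c`.  The interpretation `t` sends a bare
infinite set `A` to the quotient of `A³` by `≐` with `c` interpreted as the class of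
triples with distinct last coordinates; `s` deletes the constant.  The composites
are definably isomorphic to the originals:
(1) `η : A ≅ s(t(A))`: the map `x ↦ [⟨x,x,x⟩]` is a bijection from `A` onto the
classes of the quotient other than the constant class (the diagonal classes);
(2) `ν : ⟨B,b⟩ ≅ t(s(⟨B,b⟩))`: there is a bijection from `B` to the quotient of
`(B \ {b})³` by `≐` sending each `x ≠ b` to `[⟨x,x,x⟩]` and `b` to the constant
class of triples with distinct last coordinates. -/
theorem toy_biinterpretation :
    (∀ (A : Type), Infinite A →
      Function.Injective (fun x : A => Quot.mk (dotEq A) (x, x, x)) ∧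
      Set.range (fun x : A => Quot.mk (dotEq A) (x, x, x))
        = {q : Quot (dotEq A) | ∃ t : A × A × A,
            Quot.mk (dotEq A) t = q ∧ t.2.1 = t.2.2}) ∧
    (∀ (B : Type) (b : B), Infinite B →
      ∃ ν : B ≃ Quot (dotEq {x : B // x ≠ b}),
        (∀ (x : B) (h : x ≠ b),
          ν x = Quot.mk (dotEq {x : B // x ≠ b}) (⟨x, h⟩, ⟨x, h⟩, ⟨x, h⟩)) ∧
        (∀ t : {x : B // x ≠ b} × {x : B // x ≠ b} × {x : B // x ≠ b},
          t.2.1 ≠ t.2.2 → ν b = Quot.mk (dotEq {x : B // x ≠ b}) t)) := by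
  constructor
  · intro A _
    constructor
    · intro x y h
      have := congrArg (dotInv A) h
      simpa [dotInv_mk] using this
    · ext q
      constructor
      · rintro ⟨x, rfl⟩
        exact ⟨(x, x, x), rfl, rfl⟩
      · rintro ⟨t, rfl, ht⟩
        refine ⟨t.1, Quot.sound ?_⟩
        exact Or.inl ⟨rfl, ht, rfl⟩
  · intro B b _
    classical
    obtain ⟨u, hu⟩ := exists_ne b
    obtain ⟨v, hv⟩ := Infinite.exists_notMem_finset ({b, u} : Finset B)
    simp only [Finset.mem_insert, Finset.mem_singleton, not_or] at hv
    set S := {x : B // x ≠ b} with hS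
    set u' : S := ⟨u, hu⟩
    set v' : S := ⟨v, hv.1⟩
    have huv : u' ≠ v' := by
      intro h
      exact hv.2 (by simpa [u', v'] using congrArg Subtype.val h.symm)
    set g : B → Quot (dotEq S) := fun x =>
      if h : x = b then Quot.mk (dotEq S) (u', u', v')
      else Quot.mk (dotEq S) (⟨x, h⟩, ⟨x, h⟩, ⟨x, h⟩) with hg
    have hgb : g b = Quot.mk (dotEq S) (u', u', v') := by simp [hg]
    have hgne : ∀ (x : B) (h : x ≠ b), g x = Quot.mk (dotEq S) (⟨x, h⟩, ⟨x, h⟩, ⟨x, h⟩) := by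
      intro x h; simp [hg, h]
    have hinv : ∀ x : B, dotInv S (g x)
        = if h : x = b then none else some ⟨x, h⟩ := by
      intro x
      by_cases h : x = b <;> simp [hg, h, dotInv_mk, huv]
    have hbij : Function.Bijective g := by
      constructor
      · intro x y h
        have h2 := congrArg (dotInv S) h
        rw [hinv, hinv] at h2
        by_cases hx : x = b <;> by_cases hy : y = b
        · rw [hx, hy]
        · simp [hx, hy] at h2
        · simp [hx, hy] at h2
        · simp only [dif_neg hx, dif_neg hy, Option.some.injEq, Subtype.mk.injEq] at h2
          exact congrArg Subtype.val h2
      · intro q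
        induction q using Quot.ind with
        | _ t =>
          by_cases ht : t.2.1 = t.2.2
          · refine ⟨t.1.1, ?_⟩
            rw [hgne t.1.1 t.1.2]
            apply Quot.sound
            exact Or.inl ⟨rfl, ht, rfl⟩
          · refine ⟨b, ?_⟩
            rw [hgb]
            exact Quot.sound (Or.inr ⟨huv, ht⟩)
    refine ⟨Equiv.ofBijective g hbij, ?_, ?_⟩
    · intro x h
      simpa using hgne x h
    · intro t ht
      show g b = _
      rw [hgb]
      exact Quot.sound (Or.inr ⟨huv, ht⟩)
end

section
/- Let p be a finite partial function from (2 × ω) × ω to 2 and let k ∈ ω be larger than every index i appearing in the domain of p. Define the permutation π of 2 × ω by π(e,i) = (1−e, i+k) for i ∈ [0,k), π(e,i) = (1−e, i−k) for i ∈ [k,2k), and π(e,i) = (1−e, i) for i ≥ 2k. Then π is a permutation of 2 × ω of order dividing 2, and the conditions p and π·p are compatible (their union is a function). -/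
/-- A forcing condition: a finite partial function `(2 × ω) × ω ⇀ 2`. -/
def Cond : Type :=
  {p : (Fin 2 × ℕ) × ℕ → Option (Fin 2) // {x | p x ≠ none}.Finite}

/-- The permutation of `2 × ω` swapping the two fibers and exchanging the index
intervals `[0,k)` and `[k,2k)`: `π(e,i) = (1−e, i+k)` for `i < k`,
`(1−e, i−k)` for `k ≤ i < 2k`, and `(1−e, i)` for `i ≥ 2k`. -/
def swapPerm (k : ℕ) (x : Fin 2 × ℕ) : Fin 2 × ℕ :=
  if x.2 < k then (1 - x.1, x.2 + k)
  else if x.2 < 2 * k then (1 - x.1, x.2 - k)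
  else (1 - x.1, x.2)

/-- The relabeling action of `swapPerm k` on conditions:
`(π·p)(π(e,i), j) = p((e,i), j)`; since `π` is an involution this is
`(π·p)((e,i), j) = p(π(e,i), j)`. -/
def swapAct (k : ℕ) (p : Cond) : (Fin 2 × ℕ) × ℕ → Option (Fin 2) :=
  fun x => p.1 (swapPerm k x.1, x.2)

/-- Let `p` be a finite partial function `(2 × ω) × ω ⇀ 2` whose domain only
involves indices `i < k`.  Then `swapPerm k` is a permutation of `2 × ω` of order
dividing 2 (it is an involution), and the conditions `p` and `π·p` are compatible:
their union is a function, i.e. they agree wherever both are defined. -/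
theorem swapPerm_involutive_and_compatible (k : ℕ) (p : Cond)
    (hdom : ∀ (e : Fin 2) (i j : ℕ), p.1 ((e, i), j) ≠ none → i < k) :
    (∀ x : Fin 2 × ℕ, swapPerm k (swapPerm k x) = x) ∧
    Function.Bijective (swapPerm k) ∧
    (∀ (x : (Fin 2 × ℕ) × ℕ) (v w : Fin 2),
      p.1 x = some v → swapAct k p x = some w → v = w) := by
  have hinv : ∀ x : Fin 2 × ℕ, swapPerm k (swapPerm k x) = x := by
    intro ⟨e, i⟩
    have he : (1 : Fin 2) - (1 - e) = e := by fin_cases e <;> decide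
    unfold swapPerm
    rcases lt_or_ge i k with h1 | h1
    · simp only [h1, if_true]
      have h2 : ¬ i + k < k := by omega
      have h3 : i + k < 2 * k := by omega
      simp [h2, h3, he]
    · rcases lt_or_ge i (2 * k) with h2 | h2
      · have h1' : ¬ i < k := by omega
        have h3 : i - k < k := by omega
        simp only [if_neg h1', if_pos h2, if_pos h3]
        simp [he]; omega
      · have h1' : ¬ i < k := by omega
        have h2' : ¬ i < 2 * k := by omega
        simp [h1', h2', he]
  refine ⟨hinv, Function.Involutive.bijective hinv, ?_⟩
  rintro ⟨⟨e, i⟩, j⟩ v w hv hw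
  exfalso
  have hik : i < k := hdom e i j (by rw [hv]; simp)
  have : (swapPerm k (e, i)).2 < k := by
    have := hdom (swapPerm k (e, i)).1 (swapPerm k (e, i)).2 j ?_
    · exact this
    · simp only [swapAct] at hw
      rw [hw]; simp
  simp only [swapPerm, hik, if_true] at this
  omega
end
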